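/- arXiv:1703.00344 — 3 statements merged into one kernel-verified Lean document; each statement's English description precedes it below -/
import Mathlib

section
/- Let m, n ≥ 2, and let Φ₁ and Φ₂ be positive trace-preserving maps on m×m and n×n complex matrices, respectively. If there exists a density matrix ρ₁ on ℂ^m such that Φ₁[ρ₁] has a zero eigenvalue (i.e., Φ₁[ρ₁] is singular), or there exists a density matrix ρ₂ on ℂ^n such that Φ₂[ρ₂] is singular, then the local map Φ₁ ⊗ Φ₂ on mn×mn matrices is not absolutely separating with respect to the bipartition m|n. -/
open Matrix Kronecker BigOperators
open scoped ComplexOrder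

noncomputable section


def IsDM {ι : Type*} [Fintype ι] (ρ : Matrix ι ι ℂ) : Prop :=
  ρ.PosSemidef ∧ ρ.trace = 1

def IsSep {ι κ : Type*} [Fintype ι] [Fintype κ]
    (ρ : Matrix (ι × κ) (ι × κ) ℂ) : Prop :=
  ∃ (k : ℕ) (p : Fin k → ℝ) (A : Fin k → Matrix ι ι ℂ) (B : Fin k → Matrix κ κ ℂ),
    (∀ i, 0 ≤ p i) ∧ (∑ i, p i = 1) ∧ (∀ i, IsDM (A i)) ∧ (∀ i, IsDM (B i)) ∧
    ρ = ∑ i, (p i : ℂ) • (A i ⊗ₖ B i)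

def IsAbsSep {ι κ : Type*} [Fintype ι] [Fintype κ] [DecidableEq ι] [DecidableEq κ]
    (ρ : Matrix (ι × κ) (ι × κ) ℂ) : Prop :=
  ∀ U : Matrix (ι × κ) (ι × κ) ℂ, U * Uᴴ = 1 → IsSep (U * ρ * Uᴴ)

/-- The tensor product `Φ₁ ⊗ Φ₂` of linear maps, acting on matrices over a product index. -/
def tensorMap {ι κ : Type*} [Fintype ι] [Fintype κ] [DecidableEq ι]
    (Φ₁ : Matrix ι ι ℂ →ₗ[ℂ] Matrix ι ι ℂ) (Φ₂ : Matrix κ κ ℂ →ₗ[ℂ] Matrix κ κ ℂ)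
    (X : Matrix (ι × κ) (ι × κ) ℂ) : Matrix (ι × κ) (ι × κ) ℂ :=
  Matrix.of fun p q => ∑ a, ∑ b,
    Φ₁ (Matrix.single a b 1) p.1 q.1 *
      Φ₂ (Matrix.of fun c e => X (a, c) (b, e)) p.2 q.2

/-!
Feed a product state `ρ₁ ⊗ ρ₂` with `Φ₁ ρ₁` singular into `Φ₁ ⊗ Φ₂`. The output `σ = A ⊗ B` is a
density matrix whose kernel contains `x ⊗ y` for every `y`, where `A x = 0`; so `σ` has at least
two zero eigenvalues besides a nonzero one. A unitary therefore brings `σ` to diagonal form with a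
nonzero eigenvalue at `|00⟩` and zeros at `|01⟩` and `|11⟩`, and a real reflection mixing `|00⟩`
and `|11⟩` then creates a coherence between `|00⟩` and `|11⟩` while the `|01⟩` diagonal entry stays
zero. No separable state has this pattern: in `∑ pₖ Aₖ ⊗ Bₖ` a vanishing diagonal entry at
`(a, d)` forces every entry `((a, c), (b, d))` to vanish.
-/

namespace Matrix

namespace PosSemidef

variable {n : Type*} [Fintype n] {A : Matrix n n ℂ}

lemma apply_eq_zero_of_diag_left (hA : A.PosSemidef) {a : n} (h : A a a = 0) (b : n) :
    A b a = 0 := by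
  classical
  have hcol : A *ᵥ Pi.single a 1 = 0 := by
    rw [← hA.dotProduct_mulVec_zero_iff]
    simpa [mulVec_single_one, col_apply] using h
  simpa [mulVec_single_one] using congrFun hcol b

lemma apply_eq_zero_of_diag_right (hA : A.PosSemidef) {a : n} (h : A a a = 0) (b : n) :
    A a b = 0 := by
  rw [← hA.1.apply a b, hA.apply_eq_zero_of_diag_left h, star_zero]

end PosSemidef

namespace IsHermitian

variable {n : Type*} [Fintype n] [DecidableEq n] {σ : Matrix n n ℂ}

lemma exists_unitary_conj_eq_diagonal (hσ : σ.IsHermitian) (π : Equiv.Perm n) :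
    ∃ U : Matrix n n ℂ, U * Uᴴ = 1 ∧ U * σ * Uᴴ = diagonal fun p => (hσ.eigenvalues (π p) : ℂ) := by
  set E : Matrix n n ℂ := star hσ.eigenvectorUnitary
  have hconj (M : Matrix n n ℂ) :
      E.submatrix π id * M * (E.submatrix π id)ᴴ = (E * M * Eᴴ).submatrix π π := by
    ext i j
    simp [mul_apply, Finset.sum_mul]
  refine ⟨E.submatrix π id, ?_, ?_⟩
  · simpa [E, ← star_eq_conjTranspose] using hconj 1
  · have hdiag : E * σ * Eᴴ = diagonal (RCLike.ofReal ∘ hσ.eigenvalues) := by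
      simpa [E, ← star_eq_conjTranspose] using hσ.conjStarAlgAut_star_eigenvectorUnitary
    rw [hconj, hdiag, submatrix_diagonal_equiv]
    rfl

lemma exists_eigenvalues_eq_zero_of_rank_add_two_le (hσ : σ.IsHermitian)
    (h : σ.rank + 2 ≤ Fintype.card n) :
    ∃ i j, i ≠ j ∧ hσ.eigenvalues i = 0 ∧ hσ.eigenvalues j = 0 := by
  have hcard : 1 < Fintype.card {i // ¬ hσ.eigenvalues i ≠ 0} := by
    rw [Fintype.card_subtype_compl, ← hσ.rank_eq_card_non_zero_eigs]
    omega
  obtain ⟨⟨i, hi⟩, ⟨j, hj⟩, hij⟩ := Fintype.exists_pair_of_one_lt_card hcard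
  exact ⟨i, j, fun h => hij (Subtype.ext h), not_not.mp hi, not_not.mp hj⟩

lemma exists_eigenvalues_ne_zero_of_trace_ne_zero (hσ : σ.IsHermitian) (h : σ.trace ≠ 0) :
    ∃ k, hσ.eigenvalues k ≠ 0 := by
  rw [hσ.trace_eq_sum_eigenvalues] at h
  obtain ⟨k, -, hk⟩ := Finset.exists_ne_zero_of_sum_ne_zero h
  exact ⟨k, fun h0 => hk (by simp [h0])⟩

end IsHermitian

section Rank

variable {R ι κ : Type*} [Field R] [Fintype ι] [Fintype κ] [DecidableEq ι] [DecidableEq κ]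

lemma rank_kronecker_add_card_le_of_mulVec_eq_zero_left {A : Matrix ι ι R} {x : ι → R}
    (hx : x ≠ 0) (hAx : A *ᵥ x = 0) (B : Matrix κ κ R) :
    (A ⊗ₖ B).rank + Fintype.card κ ≤ Fintype.card (ι × κ) := by
  obtain ⟨i, hi⟩ := Function.ne_iff.mp hx
  set K : Matrix (ι × κ) (Unit × κ) R := replicateCol Unit x ⊗ₖ 1
  set L : Matrix (Unit × κ) (ι × κ) R := replicateRow Unit (Pi.single i (x i)⁻¹) ⊗ₖ 1
  have hAK : A ⊗ₖ B * K = 0 := by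
    rw [← mul_kronecker_mul, ← replicateCol_mulVec, hAx, replicateCol_zero, zero_kronecker]
  have hLK : L * K = 1 := by
    rw [← mul_kronecker_mul, replicateRow_mul_replicateCol, Matrix.one_mul, ← one_kronecker_one]
    congr 1
    ext
    simp [inv_mul_cancel₀ hi]
  have hK : Fintype.card κ ≤ K.rank := by
    simpa [hLK] using rank_mul_le_right L K
  have := rank_add_rank_le_card_of_mul_eq_zero hAK
  omega

lemma rank_kronecker_add_card_le_of_mulVec_eq_zero_right {B : Matrix κ κ R} {x : κ → R}
    (hx : x ≠ 0) (hBx : B *ᵥ x = 0) (A : Matrix ι ι R) :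
    (A ⊗ₖ B).rank + Fintype.card ι ≤ Fintype.card (ι × κ) := by
  have hswap : (B ⊗ₖ A).submatrix Prod.swap Prod.swap = A ⊗ₖ B := by
    ext
    simp [mul_comm]
  rw [← hswap, ← Equiv.coe_prodComm, rank_submatrix, Fintype.card_congr (Equiv.prodComm ι κ)]
  exact rank_kronecker_add_card_le_of_mulVec_eq_zero_left hx hBx A

end Rank

end Matrix

section Householder

variable {n : Type*} [DecidableEq n]

def householder (w : n → ℂ) : Matrix n n ℂ := 1 - (2 : ℂ) • vecMulVec w (star w)

lemma conjTranspose_householder (w : n → ℂ) : (householder w)ᴴ = householder w := by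
  simp [householder, conjTranspose_vecMulVec]

lemma householder_apply (w : n → ℂ) (i j : n) :
    householder w i j = (1 : Matrix n n ℂ) i j - 2 * (w i * star (w j)) := by
  simp [householder, vecMulVec_apply]

variable [Fintype n]

lemma householder_mul_self {w : n → ℂ} (hw : star w ⬝ᵥ w = 1) :
    householder w * householder w = 1 := by
  simp only [householder, sub_mul, mul_sub, Matrix.one_mul, Matrix.mul_one, smul_mul_smul,
    vecMulVec_mul_vecMulVec, hw, one_smul]
  module

lemma householder_mul_diagonal_mul_apply_of_eq_zero {w : n → ℂ} {r : n} (hr : w r = 0)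
    (d : n → ℂ) : (householder w * diagonal d * householder w) r r = d r := by
  rw [Matrix.mul_assoc]
  simp [householder, sub_mul, vecMulVec_mul, vecMulVec_apply, hr]

lemma householder_mul_diagonal_mul_apply_of_ne {q₀ q₁ : n} (hq : q₀ ≠ q₁)
    {a b : ℝ} (hab : a ^ 2 + b ^ 2 = 1) {w : n → ℂ}
    (hw : w = Pi.single q₀ (a : ℂ) + Pi.single q₁ (b : ℂ)) (d : n → ℂ) :
    (householder w * diagonal d * householder w) q₀ q₁ =
      2 * a * b * (2 * a ^ 2 - 1) * (d q₀ - d q₁) := by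
  subst hw
  rw [mul_apply, Fintype.sum_eq_add q₀ q₁ hq]
  · simp [householder_apply, hq, one_apply]
    have hb : (b : ℂ) ^ 2 = 1 - a ^ 2 := by exact_mod_cast (by linarith : b ^ 2 = 1 - a ^ 2)
    linear_combination (4 * a * b * d q₁) * hb
  · rintro l ⟨hl₀, hl₁⟩
    simp [householder_apply, hl₁, one_apply, Ne.symm hl₀]

end Householder

section States

variable {ι κ : Type*} [Fintype ι] [Fintype κ]

lemma IsDM.kronecker {A : Matrix ι ι ℂ} {B : Matrix κ κ ℂ} (hA : IsDM A) (hB : IsDM B) :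
    IsDM (A ⊗ₖ B) :=
  ⟨hA.1.kronecker hB.1, by rw [trace_kronecker, hA.2, hB.2, one_mul]⟩

lemma exists_isDM [DecidableEq ι] [Nonempty ι] : ∃ ρ : Matrix ι ι ℂ, IsDM ρ := by
  obtain ⟨i⟩ := ‹Nonempty ι›
  refine ⟨diagonal (Pi.single i 1), PosSemidef.diagonal ?_, ?_⟩
  · exact Pi.single_nonneg.mpr zero_le_one
  · simp [trace_diagonal]

lemma tensorMap_kronecker [DecidableEq ι] (Φ₁ : Matrix ι ι ℂ →ₗ[ℂ] Matrix ι ι ℂ)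
    (Φ₂ : Matrix κ κ ℂ →ₗ[ℂ] Matrix κ κ ℂ) (A : Matrix ι ι ℂ) (B : Matrix κ κ ℂ) :
    tensorMap Φ₁ Φ₂ (A ⊗ₖ B) = Φ₁ A ⊗ₖ Φ₂ B := by
  have hslice (a b : ι) : (of fun c e => (A ⊗ₖ B) (a, c) (b, e)) = A a b • B := by
    ext; simp
  have hA : Φ₁ A = ∑ a, ∑ b, A a b • Φ₁ (single a b 1) := by
    conv_lhs => rw [matrix_eq_sum_single A]
    simp [map_sum, ← LinearMap.map_smul, Matrix.smul_single]
  ext ⟨p₁, p₂⟩ ⟨q₁, q₂⟩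
  simp only [tensorMap, of_apply, hslice, LinearMap.map_smul, Matrix.smul_apply, smul_eq_mul]
  rw [kroneckerMap_apply, hA]
  simp only [Matrix.sum_apply, Matrix.smul_apply, smul_eq_mul, Finset.sum_mul]
  exact Finset.sum_congr rfl fun a _ => Finset.sum_congr rfl fun b _ => by ring

lemma IsSep.apply_eq_zero_of_diag {ρ : Matrix (ι × κ) (ι × κ) ℂ} (hρ : IsSep ρ)
    {a : ι} {d : κ} (h : ρ (a, d) (a, d) = 0) (b : ι) (c : κ) : ρ (a, c) (b, d) = 0 := by
  obtain ⟨k, p, A, B, hp, -, hA, hB, rfl⟩ := hρ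
  have hterm_nonneg (i : Fin k) : 0 ≤ (p i : ℂ) * (A i a a * B i d d) :=
    mul_nonneg (by exact_mod_cast hp i) (mul_nonneg (hA i).1.diag_nonneg (hB i).1.diag_nonneg)
  simp only [Matrix.sum_apply, Matrix.smul_apply, kroneckerMap_apply, smul_eq_mul] at h ⊢
  rw [Finset.sum_eq_zero_iff_of_nonneg fun i _ => hterm_nonneg i] at h
  refine Finset.sum_eq_zero fun i hi => ?_
  rcases mul_eq_zero.mp (h i hi) with hpi | hAB
  · rw [hpi, zero_mul]
  rcases mul_eq_zero.mp hAB with hAa | hBd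
  · rw [(hA i).1.apply_eq_zero_of_diag_right hAa, zero_mul, mul_zero]
  · rw [(hB i).1.apply_eq_zero_of_diag_left hBd, mul_zero, mul_zero]

variable [DecidableEq ι] [DecidableEq κ] [Nontrivial ι] [Nontrivial κ]

lemma not_isAbsSep_of_rank_add_two_le {σ : Matrix (ι × κ) (ι × κ) ℂ} (hσ : σ.IsHermitian)
    (htr : σ.trace ≠ 0) (hrank : σ.rank + 2 ≤ Fintype.card (ι × κ)) : ¬ IsAbsSep σ := by
  intro habs
  obtain ⟨i, j, hij, hi, hj⟩ := hσ.exists_eigenvalues_eq_zero_of_rank_add_two_le hrank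
  obtain ⟨k, hk⟩ := hσ.exists_eigenvalues_ne_zero_of_trace_ne_zero htr
  have hki : k ≠ i := fun h => hk (h ▸ hi)
  have hkj : k ≠ j := fun h => hk (h ▸ hj)
  obtain ⟨a₀, a₁, ha⟩ := exists_pair_ne ι
  obtain ⟨b₀, b₁, hb⟩ := exists_pair_ne κ
  obtain ⟨π, hπ⟩ := Equiv.Perm.exists_extending_pair ![(a₀, b₀), (a₁, b₁), (a₀, b₁)] ![k, i, j]
    (by intro x y; fin_cases x <;> fin_cases y <;> simp [ha, hb, ha.symm, hb.symm])
    (by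
      intro x y
      fin_cases x <;> fin_cases y <;> simp [hij, hki, hkj, hij.symm, hki.symm, hkj.symm])
  have hπk : π (a₀, b₀) = k := hπ 0
  have hπi : π (a₁, b₁) = i := hπ 1
  have hπj : π (a₀, b₁) = j := hπ 2
  obtain ⟨U, hU, hUσ⟩ := hσ.exists_unitary_conj_eq_diagonal π
  set d : ι × κ → ℂ := fun p => (hσ.eigenvalues (π p) : ℂ)
  -- `(a, b) = (3/5, 4/5)` is a rational unit vector with `a * b * (2 * a ^ 2 - 1) ≠ 0`.
  set w : ι × κ → ℂ :=
    Pi.single (a₀, b₀) ((3 / 5 : ℝ) : ℂ) + Pi.single (a₁, b₁) ((4 / 5 : ℝ) : ℂ)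
  set H := householder w
  have hH : H * H = 1 := householder_mul_self (by simp [w, dotProduct_add, ha]; norm_num)
  have hτ : H * U * σ * (H * U)ᴴ = H * diagonal d * H := by
    rw [conjTranspose_mul, conjTranspose_householder, ← hUσ]
    simp only [Matrix.mul_assoc, H]
  have hsep := habs (H * U) (by
    rw [conjTranspose_mul, conjTranspose_householder, Matrix.mul_assoc, ← Matrix.mul_assoc U, hU,
      Matrix.one_mul, hH])
  rw [hτ] at hsep
  have h01 : (H * diagonal d * H) (a₀, b₁) (a₀, b₁) = 0 := by
    rw [householder_mul_diagonal_mul_apply_of_eq_zero (by simp [w, hb, ha])]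
    simp [d, hπj, hj]
  have h0011 := hsep.apply_eq_zero_of_diag h01 a₁ b₀
  rw [householder_mul_diagonal_mul_apply_of_ne (by simp [ha]) (by norm_num) rfl] at h0011
  norm_num [d, hπk, hπi, hi, hk] at h0011

lemma not_isAbsSep_kronecker {A : Matrix ι ι ℂ} {B : Matrix κ κ ℂ} (hA : IsDM A) (hB : IsDM B)
    (hdet : A.det = 0 ∨ B.det = 0) : ¬ IsAbsSep (A ⊗ₖ B) := by
  have hAB := hA.kronecker hB
  refine not_isAbsSep_of_rank_add_two_le hAB.1.1 (by rw [hAB.2]; exact one_ne_zero) ?_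
  have hι := Fintype.one_lt_card (α := ι)
  have hκ := Fintype.one_lt_card (α := κ)
  rcases hdet with hdet | hdet
  · obtain ⟨x, hx, hAx⟩ := exists_mulVec_eq_zero_iff.mpr hdet
    have := rank_kronecker_add_card_le_of_mulVec_eq_zero_left hx hAx B
    omega
  · obtain ⟨x, hx, hBx⟩ := exists_mulVec_eq_zero_iff.mpr hdet
    have := rank_kronecker_add_card_le_of_mulVec_eq_zero_right hx hBx A
    omega

end States

theorem stmt7 (m n : ℕ) (hm : 2 ≤ m) (hn : 2 ≤ n)
    (Φ₁ : Matrix (Fin m) (Fin m) ℂ →ₗ[ℂ] Matrix (Fin m) (Fin m) ℂ)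
    (Φ₂ : Matrix (Fin n) (Fin n) ℂ →ₗ[ℂ] Matrix (Fin n) (Fin n) ℂ)
    (h1pos : ∀ X, X.PosSemidef → (Φ₁ X).PosSemidef)
    (h1tr : ∀ X, (Φ₁ X).trace = X.trace)
    (h2pos : ∀ X, X.PosSemidef → (Φ₂ X).PosSemidef)
    (h2tr : ∀ X, (Φ₂ X).trace = X.trace)
    (hsing : (∃ ρ₁, IsDM ρ₁ ∧ (Φ₁ ρ₁).det = 0) ∨ (∃ ρ₂, IsDM ρ₂ ∧ (Φ₂ ρ₂).det = 0)) :
    ¬ ∀ ρ, IsDM ρ → IsAbsSep (tensorMap Φ₁ Φ₂ ρ) := by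
  have : Nontrivial (Fin m) := Fin.nontrivial_iff_two_le.mpr hm
  have : Nontrivial (Fin n) := Fin.nontrivial_iff_two_le.mpr hn
  have hΦ₁ (ρ) (h : IsDM ρ) : IsDM (Φ₁ ρ) := ⟨h1pos ρ h.1, (h1tr ρ).trans h.2⟩
  have hΦ₂ (ρ) (h : IsDM ρ) : IsDM (Φ₂ ρ) := ⟨h2pos ρ h.1, (h2tr ρ).trans h.2⟩
  obtain ⟨ρ₁, ρ₂, h₁, h₂, hdet⟩ : ∃ ρ₁ ρ₂, IsDM ρ₁ ∧ IsDM ρ₂ ∧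
      ((Φ₁ ρ₁).det = 0 ∨ (Φ₂ ρ₂).det = 0) := by
    rcases hsing with ⟨ρ₁, h₁, hdet⟩ | ⟨ρ₂, h₂, hdet⟩
    · obtain ⟨ρ₂, h₂⟩ := exists_isDM (ι := Fin n)
      exact ⟨ρ₁, ρ₂, h₁, h₂, .inl hdet⟩
    · obtain ⟨ρ₁, h₁⟩ := exists_isDM (ι := Fin m)
      exact ⟨ρ₁, ρ₂, h₁, h₂, .inr hdet⟩
  intro hall
  have hsep := hall _ (h₁.kronecker h₂)
  rw [tensorMap_kronecker] at hsep
  exact not_isAbsSep_kronecker (hΦ₁ ρ₁ h₁) (hΦ₂ ρ₂ h₂) hdet hsep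

end
end

section
/- Let d ≥ 2 and let Φ be a positive trace-preserving linear map on d×d complex matrices with maximal output purity ‖Φ‖²_{1→2} and minimal output entropy h(Φ). If N ≥ 2 satisfies either N > 8/(d·‖Φ‖²_{1→2} − 1) + 1 (with d·‖Φ‖²_{1→2} > 1), or N > 8·((log d + 1)/(log d − h(Φ)))² + 1 (with h(Φ) < log d), then Φ is not N-tensor-stable absolutely separating; that is, there exist integers m, n ≥ 2 with mn = d^N such that the N-fold tensor power Φ^{⊗N} is not absolutely separating with respect to the bipartition m|n. In fact, for a density matrix ρ maximizing tr((Φ[ρ])²) (respectively minimizing the entropy of Φ[ρ]), the output Φ^{⊗N}[ρ^{⊗N}] = (Φ[ρ])^{⊗N} is not absolutely separable with respect to any bipartition m|n of d^N. -/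
open Matrix Kronecker BigOperators
open scoped ComplexOrder

noncomputable section


/-- The Kronecker product of a family of `d × d` matrices. -/
def kronPow {N d : ℕ} (A : Fin N → Matrix (Fin d) (Fin d) ℂ) :
    Matrix (Fin N → Fin d) (Fin N → Fin d) ℂ :=
  Matrix.of fun f g => ∏ j, A j (f j) (g j)

/-- `N`-fold tensor power `Φ^{⊗N}` of a linear map on `d × d` matrices. -/
def kronPowMap {d N : ℕ} (Φ : Matrix (Fin d) (Fin d) ℂ →ₗ[ℂ] Matrix (Fin d) (Fin d) ℂ)
    (X : Matrix (Fin N → Fin d) (Fin N → Fin d) ℂ) :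
    Matrix (Fin N → Fin d) (Fin N → Fin d) ℂ :=
  Matrix.of fun f g => ∑ a : Fin N → Fin d, ∑ b : Fin N → Fin d,
    (∏ j, Φ (Matrix.single (a j) (b j) 1) (f j) (g j)) * X a b

/-- Identification of `(ℂ^d)^{⊗N}` with `ℂ^m ⊗ ℂ^n` when `m * n = d ^ N`. -/
def biEquiv (d N m n : ℕ) (h : m * n = d ^ N) : (Fin N → Fin d) ≃ Fin m × Fin n :=
  (finFunctionFinEquiv.trans (finCongr h.symm)).trans finProdFinEquiv.symm

/-!
If the largest eigenvalue `λ` of a state `σ` on `ℂ^m ⊗ ℂ^n` exceeds the sum of three other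
eigenvalues, a unitary taking the corresponding eigenvectors to the Bell state
`(e₀₀ + e₁₁) / √2` and to `e₀₁`, `e₁₀`, `(e₀₀ - e₁₁) / √2` turns `σ` into a state whose partial
transpose has negative expectation in `e₀₁ - e₁₀`; separable states have none, so `σ` is not
absolutely separable. By averaging, the three smallest eigenvalues sum to at most
`3 (1 - λ) / (mn - 1)`, so `3 < λ (mn + 2)` suffices.

For `σ = (Φ ρ)^{⊗N}`, the `N`-th power of the top eigenvalue `μ` of `Φ ρ` is an eigenvalue of `σ`,
and `μ ≥ tr (Φ ρ)²`, `μ ≥ exp (-S (Φ ρ))`. The hypotheses on `N` give `3 < (d μ) ^ N` by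
Bernoulli's inequality, resp. by `exp x ≥ 1 + x`.
-/

section Witness

variable {ι κ : Type*} [Fintype ι] [Fintype κ]

/-- `⟨z, ρ^Γ z⟩` for `z = e_{i₀j₁} - e_{i₁j₀}`, where `ρ^Γ` is the partial transpose of `ρ` on the
first factor. -/
def pptWitness (i₀ i₁ : ι) (j₀ j₁ : κ) : Matrix (ι × κ) (ι × κ) ℂ →ₗ[ℂ] ℂ :=
  entryLinearMap ℂ ℂ (i₀, j₁) (i₀, j₁) + entryLinearMap ℂ ℂ (i₁, j₀) (i₁, j₀)
    - entryLinearMap ℂ ℂ (i₀, j₀) (i₁, j₁) - entryLinearMap ℂ ℂ (i₁, j₁) (i₀, j₀)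

variable [DecidableEq ι] [DecidableEq κ]

lemma pptWitness_kronecker (i₀ i₁ : ι) (j₀ j₁ : κ) (A : Matrix ι ι ℂ) (B : Matrix κ κ ℂ) :
    pptWitness i₀ i₁ j₀ j₁ (A ⊗ₖ B) =
      let z : ι × κ → ℂ := Pi.single (i₀, j₁) 1 - Pi.single (i₁, j₀) 1
      star z ⬝ᵥ (Aᵀ ⊗ₖ B) *ᵥ z := by
  simp [pptWitness, mulVec_sub, dotProduct_sub, sub_dotProduct]
  ring

lemma IsSep.re_pptWitness_nonneg {ρ : Matrix (ι × κ) (ι × κ) ℂ} (hρ : IsSep ρ)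
    (i₀ i₁ : ι) (j₀ j₁ : κ) : 0 ≤ (pptWitness i₀ i₁ j₀ j₁ ρ).re := by
  obtain ⟨k, p, A, B, hp, -, hA, hB, rfl⟩ := hρ
  simp only [map_sum, map_smul, Complex.re_sum, smul_eq_mul, Complex.re_ofReal_mul]
  refine Finset.sum_nonneg fun i _ => mul_nonneg (hp i) ?_
  rw [pptWitness_kronecker]
  exact ((hA i).1.transpose.kronecker (hB i).1).re_dotProduct_nonneg _

end Witness

section Bell

variable {ι : Type*} [DecidableEq ι] {x y : ι}

/-- Acts as the Hadamard matrix on `span {e_x, e_y}` and as the identity on its complement. -/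
def bellUnitary (x y : ι) : Matrix ι ι ℂ :=
  of fun i => if i = x then (√2 : ℂ)⁻¹ • (Pi.single x 1 + Pi.single y 1)
    else if i = y then (√2 : ℂ)⁻¹ • (Pi.single x 1 - Pi.single y 1) else Pi.single i 1

lemma bellUnitary_row_left : bellUnitary x y x = (√2 : ℂ)⁻¹ • (Pi.single x 1 + Pi.single y 1) :=
  if_pos rfl

lemma bellUnitary_row_right (hxy : x ≠ y) :
    bellUnitary x y y = (√2 : ℂ)⁻¹ • (Pi.single x 1 - Pi.single y 1) :=
  (if_neg hxy.symm).trans (if_pos rfl)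

lemma bellUnitary_row_of_ne {i : ι} (hix : i ≠ x) (hiy : i ≠ y) :
    bellUnitary x y i = Pi.single i 1 :=
  (if_neg hix).trans (if_neg hiy)

lemma inv_sqrt_two_mul_self : (√2 : ℂ)⁻¹ * (√2 : ℂ)⁻¹ = 2⁻¹ := by
  rw [← mul_inv, ← Complex.ofReal_mul, Real.mul_self_sqrt zero_le_two, Complex.ofReal_ofNat]

variable [Fintype ι]

lemma bellUnitary_mul_conjTranspose (hxy : x ≠ y) :
    bellUnitary x y * (bellUnitary x y)ᴴ = 1 := by
  ext i j
  simp only [mul_apply', conjTranspose_apply]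
  obtain rfl | rfl | ⟨hix, hxi, hiy, hyi⟩ : x = i ∨ y = i ∨ (i ≠ x ∧ x ≠ i ∧ i ≠ y ∧ y ≠ i) := by
    tauto
  all_goals
    obtain rfl | rfl | ⟨hjx, hxj, hjy, hyj⟩ : x = j ∨ y = j ∨ (j ≠ x ∧ x ≠ j ∧ j ≠ y ∧ y ≠ j) := by
      tauto
  all_goals
    simp [bellUnitary_row_left, bellUnitary_row_right, bellUnitary_row_of_ne, hxy.symm,
      add_dotProduct, sub_dotProduct, Pi.single_apply, one_apply, mul_add, mul_sub,
      inv_sqrt_two_mul_self, *]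
  all_goals norm_num

lemma mul_diagonal_mul_conjTranspose_apply (M : Matrix ι ι ℂ) (μ : ι → ℂ) (u v : ι) :
    (M * diagonal μ * Mᴴ) u v = ∑ k, M u k * μ k * star (M v k) := by
  rw [mul_apply]
  simp [mul_diagonal]

end Bell

section AbsSep

variable {ι κ : Type*} [Fintype ι] [Fintype κ] [DecidableEq ι] [DecidableEq κ]
  {ρ : Matrix (ι × κ) (ι × κ) ℂ}

lemma IsAbsSep.unitary_conj (hρ : IsAbsSep ρ) {V : Matrix (ι × κ) (ι × κ) ℂ} (hV : V * Vᴴ = 1) :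
    IsAbsSep (V * ρ * Vᴴ) := by
  intro U hU
  have hUV : U * V * (U * V)ᴴ = 1 := by
    rw [conjTranspose_mul, mul_assoc, ← mul_assoc V, hV, one_mul, hU]
  simpa only [conjTranspose_mul, mul_assoc] using hρ (U * V) hUV

lemma IsAbsSep.submatrix (hρ : IsAbsSep ρ) (π : Equiv.Perm (ι × κ)) :
    IsAbsSep (ρ.submatrix π π) := by
  have hP : π.permMatrix ℂ * (π.permMatrix ℂ)ᴴ = 1 := by
    rw [conjTranspose_permMatrix, ← permMatrix_mul, inv_mul_cancel, permMatrix_one]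
  simpa [conjTranspose_permMatrix, PEquiv.toMatrix_toPEquiv_mul, PEquiv.mul_toMatrix_toPEquiv,
    Equiv.Perm.inv_def] using hρ.unitary_conj hP

lemma IsAbsSep.diagonal_eigenvalues (hρ : IsAbsSep ρ) (hH : ρ.IsHermitian) :
    IsAbsSep (diagonal fun q => (hH.eigenvalues q : ℂ)) := by
  set W : Matrix (ι × κ) (ι × κ) ℂ := (hH.eigenvectorUnitary : Matrix (ι × κ) (ι × κ) ℂ)
  have hdiag : Wᴴ * ρ * Wᴴᴴ = diagonal fun q => (hH.eigenvalues q : ℂ) := by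
    simpa [Unitary.conjStarAlgAut_star_apply, Function.comp_def, star_eq_conjTranspose] using
      hH.conjStarAlgAut_star_eigenvectorUnitary
  have hW : Wᴴ * Wᴴᴴ = 1 := by
    simpa [star_eq_conjTranspose] using Unitary.star_mul_self_of_mem hH.eigenvectorUnitary.2
  exact hdiag ▸ hρ.unitary_conj hW

lemma pptWitness_bellUnitary_conj_diagonal {i₀ i₁ : ι} {j₀ j₁ : κ} (hi : i₀ ≠ i₁) (hj : j₀ ≠ j₁)
    (μ : ι × κ → ℂ) :
    pptWitness i₀ i₁ j₀ j₁
        (bellUnitary (i₀, j₀) (i₁, j₁) * diagonal μ * (bellUnitary (i₀, j₀) (i₁, j₁))ᴴ) =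
      μ (i₀, j₁) + μ (i₁, j₀) + μ (i₁, j₁) - μ (i₀, j₀) := by
  have hxy : ((i₀, j₀) : ι × κ) ≠ (i₁, j₁) := by simp [hi]
  simp [pptWitness, mul_diagonal_mul_conjTranspose_apply, bellUnitary_row_left,
    bellUnitary_row_right hxy, bellUnitary_row_of_ne, hi, hj, hi.symm, hj.symm, Pi.single_apply,
    mul_add, add_mul, mul_sub, sub_mul, Finset.sum_add_distrib, Finset.sum_sub_distrib]
  linear_combination (2 * (μ (i₁, j₁) - μ (i₀, j₀))) * inv_sqrt_two_mul_self

lemma not_isAbsSep_diagonal {i₀ i₁ : ι} {j₀ j₁ : κ} (hi : i₀ ≠ i₁) (hj : j₀ ≠ j₁)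
    (μ : ι × κ → ℝ) (hμ : μ (i₀, j₁) + μ (i₁, j₀) + μ (i₁, j₁) < μ (i₀, j₀)) :
    ¬ IsAbsSep (diagonal fun q => (μ q : ℂ)) := by
  intro h
  have hU := bellUnitary_mul_conjTranspose (x := (i₀, j₀)) (y := (i₁, j₁)) (by simp [hi])
  have hW := (h _ hU).re_pptWitness_nonneg i₀ i₁ j₀ j₁
  rw [pptWitness_bellUnitary_conj_diagonal hi hj] at hW
  simp only [← Complex.ofReal_add, ← Complex.ofReal_sub, Complex.ofReal_re] at hW
  linarith

end AbsSep

section Averaging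

open Finset

variable {ι : Type*} [DecidableEq ι]

lemma Finset.exists_subset_card_eq_card_mul_sum_le (s : Finset ι) (f : ι → ℝ) {k : ℕ}
    (hk : k ≤ #s) : ∃ t ⊆ s, #t = k ∧ #s * ∑ i ∈ t, f i ≤ k * ∑ i ∈ s, f i := by
  obtain ⟨t, hts, hmin⟩ := (s.powersetCard k).exists_min_image (fun t => ∑ i ∈ t, f i)
    (powersetCard_nonempty.2 hk)
  obtain ⟨hts, htk⟩ := mem_powersetCard.1 hts
  -- by minimality of `t`, swapping `x ∈ t` for `y ∈ s \ t` cannot decrease the sum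
  have hle : ∀ x ∈ t, ∀ y ∈ s \ t, f x ≤ f y := by
    intro x hx y hy
    obtain ⟨hys, hyt⟩ := mem_sdiff.1 hy
    have hyt' : y ∉ t.erase x := fun h => hyt (mem_of_mem_erase h)
    have hswap := hmin (insert y (t.erase x)) <| mem_powersetCard.2
      ⟨insert_subset hys ((erase_subset x t).trans hts), by rw [card_insert_of_notMem hyt',
        card_erase_of_mem hx, htk, Nat.sub_add_cancel (card_pos.2 ⟨x, hx⟩ |>.trans_eq htk)]⟩
    rw [sum_insert hyt', ← add_sum_erase t f hx] at hswap
    linarith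
  have hcross : (#(s \ t) : ℝ) * ∑ i ∈ t, f i ≤ k * ∑ i ∈ s \ t, f i := by
    calc (#(s \ t) : ℝ) * ∑ i ∈ t, f i = ∑ y ∈ s \ t, ∑ x ∈ t, f x := by
          rw [sum_const, nsmul_eq_mul]
      _ ≤ ∑ y ∈ s \ t, ∑ _x ∈ t, f y :=
          sum_le_sum fun y hy => sum_le_sum fun x hx => hle x hx y hy
      _ = k * ∑ i ∈ s \ t, f i := by simp [htk, mul_sum]
  refine ⟨t, hts, htk, ?_⟩
  rw [← sum_sdiff hts, ← add_tsub_cancel_of_le (card_le_card hts), ← card_sdiff_of_subset hts, htk]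
  push_cast
  linarith

variable [Fintype ι]

lemma exists_three_sum_lt_of_sum_eq_one (f : ι → ℝ) (hf : ∑ i, f i = 1)
    (hcard : 4 ≤ Fintype.card ι) {q : ι} (hq : 3 < f q * (Fintype.card ι + 2)) :
    ∃ a b c : ι, Function.Injective ![q, a, b, c] ∧ f a + f b + f c < f q := by
  obtain ⟨t, hts, ht3, hsum⟩ := (univ.erase q).exists_subset_card_eq_card_mul_sum_le f
    (k := 3) (by rw [card_erase_of_mem (mem_univ q), card_univ]; omega)
  obtain ⟨a, b, c, hab, hac, hbc, rfl⟩ := card_eq_three.1 ht3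
  have hqa := (ne_of_mem_erase (hts (by simp : a ∈ _))).symm
  have hqb := (ne_of_mem_erase (hts (by simp : b ∈ _))).symm
  have hqc := (ne_of_mem_erase (hts (by simp : c ∈ _))).symm
  refine ⟨a, b, c, ?_, ?_⟩
  · simp only [Matrix.vecCons, Fin.cons_injective_iff]
    simp [hqa, hqb, hqc, hab, hac, hbc, Function.injective_of_subsingleton]
  · rw [sum_erase_eq_sub (mem_univ q), hf, card_erase_of_mem (mem_univ q), card_univ,
      Nat.cast_sub (by omega), sum_insert (by simp [hab, hac]), sum_insert (by simp [hbc]),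
      sum_singleton] at hsum
    have h4 : (4 : ℝ) ≤ Fintype.card ι := by exact_mod_cast hcard
    push_cast at hsum
    -- `(D - 1) (f a + f b + f c) ≤ 3 (1 - f q) < (D - 1) f q`, where `D = card ι`
    nlinarith

end Averaging

section Spectrum

open Finset

variable {ι : Type*} [Fintype ι] {p : ι → ℝ} {M : ℝ}

lemma sum_mul_self_le_of_le (hp : ∀ i, 0 ≤ p i) (hsum : ∑ i, p i = 1) (hM : ∀ i, p i ≤ M) :
    ∑ i, p i * p i ≤ M :=
  calc ∑ i, p i * p i ≤ ∑ i, M * p i :=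
        sum_le_sum fun i _ => mul_le_mul_of_nonneg_right (hM i) (hp i)
    _ = M := by rw [← mul_sum, hsum, mul_one]

lemma exp_sum_mul_log_le_of_le (hp : ∀ i, 0 ≤ p i) (hsum : ∑ i, p i = 1) (hM : ∀ i, p i ≤ M) :
    Real.exp (∑ i, p i * Real.log (p i)) ≤ M := by
  obtain ⟨i, -, hi⟩ := exists_ne_zero_of_sum_ne_zero (hsum.trans_ne one_ne_zero)
  have hM₀ : 0 < M := ((hp i).lt_of_ne' hi).trans_le (hM i)
  calc Real.exp (∑ i, p i * Real.log (p i)) ≤ Real.exp (∑ i, p i * Real.log M) := by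
        refine Real.exp_le_exp.2 (sum_le_sum fun i _ => ?_)
        rcases (hp i).eq_or_lt with h | h
        · simp [← h]
        · exact mul_le_mul_of_nonneg_left (Real.log_le_log h (hM i)) h.le
    _ = M := by rw [← sum_mul, hsum, one_mul, Real.exp_log hM₀]

lemma trace_submatrix_equiv {κ : Type*} [Fintype κ] (A : Matrix ι ι ℂ) (e : κ ≃ ι) :
    (A.submatrix e e).trace = A.trace :=
  e.sum_comp A.diag

variable [DecidableEq ι] {A : Matrix ι ι ℂ}

lemma Matrix.IsHermitian.trace_mul_self (hA : A.IsHermitian) :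
    (A * A).trace = ∑ i, ((hA.eigenvalues i * hA.eigenvalues i : ℝ) : ℂ) := by
  conv_lhs => rw [hA.spectral_theorem, ← map_mul]
  rw [Unitary.conjStarAlgAut_apply, trace_mul_cycle, Unitary.coe_star_mul_self, one_mul,
    diagonal_mul_diagonal, trace_diagonal]
  simp

lemma Matrix.IsHermitian.sum_eigenvalues_eq_one (hA : A.IsHermitian) (htr : A.trace = 1) :
    ∑ i, hA.eigenvalues i = 1 := by
  have h := hA.trace_eq_sum_eigenvalues
  rw [htr] at h
  simpa using congrArg Complex.re h.symm

lemma Matrix.IsHermitian.exists_eigenvalues_isMax (hA : A.IsHermitian) (htr : A.trace = 1) :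
    ∃ i, ∀ j, hA.eigenvalues j ≤ hA.eigenvalues i := by
  obtain ⟨i, -, -⟩ := exists_ne_zero_of_sum_ne_zero
    ((hA.sum_eigenvalues_eq_one htr).trans_ne one_ne_zero)
  have : Nonempty ι := ⟨i⟩
  exact Finite.exists_max hA.eigenvalues

lemma Matrix.IsHermitian.exists_eigenvalues_eq (hA : A.IsHermitian) {v : ι → ℂ} (hv : v ≠ 0) {μ : ℝ}
    (hAv : A *ᵥ v = (μ : ℂ) • v) : ∃ i, hA.eigenvalues i = μ := by
  have hμ : (μ : ℂ) ∈ spectrum ℂ A := by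
    rw [← spectrum_toLin']
    exact (Module.End.hasEigenvalue_of_hasEigenvector
      ⟨Module.End.mem_eigenspace_iff.2 (by simpa using hAv), hv⟩).mem_spectrum
  obtain ⟨_, ⟨i, rfl⟩, hi⟩ := hA.spectrum_eq_image_range ▸ hμ
  exact ⟨i, Complex.ofReal_injective hi⟩

end Spectrum

section Criterion

variable {ι κ : Type*} [Fintype ι] [Fintype κ] [DecidableEq ι] [DecidableEq κ]
  {σ : Matrix (ι × κ) (ι × κ) ℂ}

theorem not_isAbsSep_of_eigenvalues_lt [Nontrivial ι] [Nontrivial κ] (hσ : σ.IsHermitian)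
    {q a b c : ι × κ} (hinj : Function.Injective ![q, a, b, c])
    (hlt : hσ.eigenvalues a + hσ.eigenvalues b + hσ.eigenvalues c < hσ.eigenvalues q) :
    ¬ IsAbsSep σ := by
  intro h
  obtain ⟨i₀, i₁, hi⟩ := exists_pair_ne ι
  obtain ⟨j₀, j₁, hj⟩ := exists_pair_ne κ
  obtain ⟨π, hπ⟩ := Equiv.Perm.exists_extending_pair ![(i₀, j₀), (i₀, j₁), (i₁, j₀), (i₁, j₁)]
    ![q, a, b, c] (by
      simp only [Matrix.vecCons, Fin.cons_injective_iff]
      simp [hi, hj, Function.injective_of_subsingleton]) hinj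
  refine not_isAbsSep_diagonal hi hj (hσ.eigenvalues ∘ π) ?_ ?_
  · have hq : π (i₀, j₀) = q := hπ 0
    have ha : π (i₀, j₁) = a := hπ 1
    have hb : π (i₁, j₀) = b := hπ 2
    have hc : π (i₁, j₁) = c := hπ 3
    simpa [hq, ha, hb, hc] using hlt
  · simpa [submatrix_diagonal_equiv, Function.comp_def] using
      (h.diagonal_eigenvalues hσ).submatrix π

theorem not_isAbsSep_of_mulVec_eq_smul [Nontrivial ι] [Nontrivial κ] (hσ : σ.IsHermitian)
    (htr : σ.trace = 1) {v : ι × κ → ℂ} (hv : v ≠ 0) {μ : ℝ} (hσv : σ *ᵥ v = (μ : ℂ) • v)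
    (hμ : 3 < μ * (Fintype.card (ι × κ) + 2)) : ¬ IsAbsSep σ := by
  obtain ⟨q, rfl⟩ := hσ.exists_eigenvalues_eq hv hσv
  have hcard : 4 ≤ Fintype.card (ι × κ) := by
    rw [Fintype.card_prod]
    exact Nat.mul_le_mul (Fintype.one_lt_card (α := ι)) (Fintype.one_lt_card (α := κ))
  obtain ⟨a, b, c, hinj, hlt⟩ :=
    exists_three_sum_lt_of_sum_eq_one _ (hσ.sum_eigenvalues_eq_one htr) hcard hμ
  exact not_isAbsSep_of_eigenvalues_lt hσ hinj hlt

end Criterion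

section KronPow

variable {N d : ℕ}

lemma kronPow_mul (A B : Fin N → Matrix (Fin d) (Fin d) ℂ) :
    kronPow (fun j => A j * B j) = kronPow A * kronPow B := by
  ext f g
  simp only [kronPow, of_apply, mul_apply, Fintype.prod_sum, Finset.prod_mul_distrib]

lemma kronPow_conjTranspose (A : Fin N → Matrix (Fin d) (Fin d) ℂ) :
    kronPow (fun j => (A j)ᴴ) = (kronPow A)ᴴ := by
  ext f g
  simp [kronPow, star_prod]

lemma trace_kronPow (A : Fin N → Matrix (Fin d) (Fin d) ℂ) :
    (kronPow A).trace = ∏ j, (A j).trace := by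
  simp only [trace, diag, kronPow, of_apply, Fintype.prod_sum]

open scoped MatrixOrder in
lemma Matrix.PosSemidef.kronPow {A : Fin N → Matrix (Fin d) (Fin d) ℂ}
    (hA : ∀ j, (A j).PosSemidef) : (kronPow A).PosSemidef := by
  choose B hB using fun j => CStarAlgebra.nonneg_iff_eq_star_mul_self.mp (hA j).nonneg
  rw [funext hB]
  simp only [star_eq_conjTranspose, kronPow_mul, kronPow_conjTranspose]
  exact posSemidef_conjTranspose_mul_self _

lemma kronPow_mulVec (A : Fin N → Matrix (Fin d) (Fin d) ℂ) (u : Fin N → Fin d → ℂ) :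
    kronPow A *ᵥ (fun f => ∏ j, u j (f j)) = fun f => ∏ j, (A j *ᵥ u j) (f j) := by
  ext f
  simp only [mulVec, dotProduct, kronPow, of_apply, Fintype.prod_sum, Finset.prod_mul_distrib]

lemma kronPowMap_kronPow (Φ : Matrix (Fin d) (Fin d) ℂ →ₗ[ℂ] Matrix (Fin d) (Fin d) ℂ)
    (A : Fin N → Matrix (Fin d) (Fin d) ℂ) :
    kronPowMap Φ (kronPow A) = kronPow (fun j => Φ (A j)) := by
  have hΦ : ∀ (X : Matrix (Fin d) (Fin d) ℂ) x y,
      Φ X x y = ∑ a, ∑ b, Φ (single a b 1) x y * X a b := by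
    intro X x y
    conv_lhs => rw [matrix_eq_sum_single X]
    simp only [map_sum, Matrix.sum_apply]
    refine Finset.sum_congr rfl fun a _ => Finset.sum_congr rfl fun b _ => ?_
    rw [show single a b (X a b) = X a b • single a b 1 by simp [smul_single], map_smul,
      Matrix.smul_apply, smul_eq_mul, mul_comm]
  ext f g
  simp only [kronPowMap, kronPow, of_apply]
  rw [Finset.prod_congr rfl fun j _ => hΦ (A j) (f j) (g j)]
  simp only [Fintype.prod_sum, Finset.prod_mul_distrib]

end KronPow

lemma three_lt_pow_of_gt {x : ℝ} (hx : 1 < x) {N : ℕ} (hN : (N : ℝ) > 8 / (x - 1) + 1) :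
    3 < x ^ N := by
  have h8 : 8 < (N : ℝ) * (x - 1) := by
    have := (div_lt_iff₀ (sub_pos.2 hx)).1 (by linarith : 8 / (x - 1) < N - 1)
    nlinarith
  calc (3 : ℝ) < 1 + N * (x - 1) := by linarith
    _ ≤ (1 + (x - 1)) ^ N := one_add_mul_le_pow (by linarith) N
    _ = x ^ N := by ring

lemma three_lt_exp_pow {t A : ℝ} (ht : 0 < t) (hA : 1 ≤ A) {N : ℕ}
    (hN : (N : ℝ) > 8 * (A / t) ^ 2 + 1) : 3 < Real.exp t ^ N := by
  have h2 : 2 < (N : ℝ) * t := by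
    have hsq : (8 * (A / t) ^ 2 + 1) * t * t = 8 * A ^ 2 + t ^ 2 := by field_simp
    have : 2 < (8 * (A / t) ^ 2 + 1) * t := by
      refine lt_of_mul_lt_mul_right ?_ ht.le
      nlinarith [sq_nonneg (t - 1)]
    nlinarith
  rw [← Real.exp_nat_mul]
  linarith [Real.add_one_le_exp ((N : ℝ) * t)]

lemma IsDM.kronPow {N d : ℕ} {A : Fin N → Matrix (Fin d) (Fin d) ℂ} (hA : ∀ j, IsDM (A j)) :
    IsDM (kronPow A) :=
  ⟨.kronPow fun j => (hA j).1, by simp [trace_kronPow, fun j => (hA j).2]⟩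

section TensorPower

variable {d N m n : ℕ} (hm : 2 ≤ m) (hn : 2 ≤ n) (hmn : m * n = d ^ N)
  {τ : Matrix (Fin d) (Fin d) ℂ} (hτ : τ.PosSemidef) (htr : τ.trace = 1)
include hm hn hτ htr

theorem not_isAbsSep_reindex_kronPow (i : Fin d)
    (hi : 3 < (hτ.isHermitian.eigenvalues i * d) ^ N) :
    ¬ IsAbsSep (reindex (biEquiv d N m n hmn) (biEquiv d N m n hmn)
      (kronPow fun _ : Fin N => τ)) := by
  have : Nontrivial (Fin m) := Fin.nontrivial_iff_two_le.2 hm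
  have : Nontrivial (Fin n) := Fin.nontrivial_iff_two_le.2 hn
  set e := biEquiv d N m n hmn
  set μ := hτ.isHermitian.eigenvalues i
  set u : Fin d → ℂ := ⇑(hτ.isHermitian.eigenvectorBasis i)
  have hu : u ≠ 0 :=
    (WithLp.ofLp_eq_zero 2).ne.2 (hτ.isHermitian.eigenvectorBasis.orthonormal.ne_zero i)
  set v : (Fin N → Fin d) → ℂ := fun f => ∏ j, u (f j)
  have hv : v ≠ 0 := by
    obtain ⟨k, hk⟩ := Function.ne_iff.1 hu
    exact Function.ne_iff.2 ⟨fun _ => k, by simpa [v] using pow_ne_zero N hk⟩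
  have hσv : (kronPow fun _ : Fin N => τ) *ᵥ v = ((μ ^ N : ℝ) : ℂ) • v := by
    rw [kronPow_mulVec (u := fun _ => u), hτ.isHermitian.mulVec_eigenvectorBasis]
    ext f
    simp [v, Finset.prod_mul_distrib, μ, u]
  refine not_isAbsSep_of_mulVec_eq_smul ((PosSemidef.kronPow fun _ => hτ).1.submatrix e.symm)
    ?_ (v := v ∘ e.symm) ?_ (μ := μ ^ N) ?_ ?_
  · rw [reindex_apply, trace_submatrix_equiv, trace_kronPow]
    simp [htr]
  · exact fun h => hv (by simpa [Function.comp_assoc] using congrArg (· ∘ e) h)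
  · rw [reindex_apply, submatrix_mulVec_equiv]
    simp [Function.comp_assoc, hσv]
    rfl
  · have hμ : 0 ≤ μ ^ N := pow_nonneg (hτ.eigenvalues_nonneg i) N
    rw [Fintype.card_prod, Fintype.card_fin, Fintype.card_fin, hmn, mul_pow] at *
    push_cast
    nlinarith

theorem not_isAbsSep_reindex_kronPow_of_purity (hdP : 1 < d * (τ * τ).trace.re)
    (hN : (N : ℝ) > 8 / (d * (τ * τ).trace.re - 1) + 1) :
    ¬ IsAbsSep (reindex (biEquiv d N m n hmn) (biEquiv d N m n hmn)
      (kronPow fun _ : Fin N => τ)) := by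
  obtain ⟨i, hi⟩ := hτ.isHermitian.exists_eigenvalues_isMax htr
  refine not_isAbsSep_reindex_kronPow hm hn hmn hτ htr i ?_
  have hP : (τ * τ).trace.re ≤ hτ.isHermitian.eigenvalues i := by
    simpa [hτ.isHermitian.trace_mul_self] using sum_mul_self_le_of_le hτ.eigenvalues_nonneg
      (hτ.isHermitian.sum_eigenvalues_eq_one htr) hi
  calc (3 : ℝ) < (d * (τ * τ).trace.re) ^ N := three_lt_pow_of_gt hdP hN
    _ ≤ (hτ.isHermitian.eigenvalues i * d) ^ N := by
      rw [mul_comm]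
      exact pow_le_pow_left₀ (by linarith) (by gcongr) N

theorem not_isAbsSep_reindex_kronPow_of_entropy
    (hH : -∑ i, hτ.isHermitian.eigenvalues i * Real.log (hτ.isHermitian.eigenvalues i) <
      Real.log d)
    (hN : (N : ℝ) > 8 * ((Real.log d + 1) / (Real.log d -
      -∑ i, hτ.isHermitian.eigenvalues i * Real.log (hτ.isHermitian.eigenvalues i))) ^ 2 + 1) :
    ¬ IsAbsSep (reindex (biEquiv d N m n hmn) (biEquiv d N m n hmn)
      (kronPow fun _ : Fin N => τ)) := by
  obtain ⟨i, hi⟩ := hτ.isHermitian.exists_eigenvalues_isMax htr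
  refine not_isAbsSep_reindex_kronPow hm hn hmn hτ htr i ?_
  set S := ∑ i, hτ.isHermitian.eigenvalues i * Real.log (hτ.isHermitian.eigenvalues i)
  have hS : Real.exp S ≤ hτ.isHermitian.eigenvalues i :=
    exp_sum_mul_log_le_of_le hτ.eigenvalues_nonneg (hτ.isHermitian.sum_eigenvalues_eq_one htr) hi
  have hexp : Real.exp (Real.log d - -S) = d * Real.exp S := by
    rw [sub_neg_eq_add, Real.exp_add, Real.exp_log (by exact_mod_cast i.pos)]
  calc (3 : ℝ) < Real.exp (Real.log d - -S) ^ N :=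
        three_lt_exp_pow (by linarith) (by linarith [Real.log_natCast_nonneg d]) hN
    _ ≤ (hτ.isHermitian.eigenvalues i * d) ^ N := by
      rw [hexp, mul_comm]
      exact pow_le_pow_left₀ (by positivity) (by gcongr) N

end TensorPower

theorem stmt9 (d : ℕ) (hd : 2 ≤ d)
    (Φ : Matrix (Fin d) (Fin d) ℂ →ₗ[ℂ] Matrix (Fin d) (Fin d) ℂ)
    (hpos : ∀ X, X.PosSemidef → (Φ X).PosSemidef)
    (htr : ∀ X, (Φ X).trace = X.trace)
    (P h : ℝ)
    (hP : IsGreatest {x : ℝ | ∃ ρ, IsDM ρ ∧ x = ((Φ ρ * Φ ρ).trace).re} P)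
    (hh : IsLeast {x : ℝ | ∃ ρ, ∃ hρ : IsDM ρ, x =
        -∑ i, ((hpos ρ hρ.1).isHermitian.eigenvalues i *
          Real.log ((hpos ρ hρ.1).isHermitian.eigenvalues i))} h)
    (N : ℕ) (hN : 2 ≤ N)
    (hcond : (1 < (d : ℝ) * P ∧ (N : ℝ) > 8 / ((d : ℝ) * P - 1) + 1) ∨
      (h < Real.log d ∧ (N : ℝ) > 8 * ((Real.log d + 1) / (Real.log d - h)) ^ 2 + 1)) :
    (∃ m n : ℕ, 2 ≤ m ∧ 2 ≤ n ∧ ∃ hmn : m * n = d ^ N,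
      ¬ ∀ ρ : Matrix (Fin N → Fin d) (Fin N → Fin d) ℂ, IsDM ρ →
        IsAbsSep (Matrix.reindex (biEquiv d N m n hmn) (biEquiv d N m n hmn)
          (kronPowMap Φ ρ))) ∧
    ((1 < (d : ℝ) * P ∧ (N : ℝ) > 8 / ((d : ℝ) * P - 1) + 1) →
      ∀ ρ, IsDM ρ → ((Φ ρ * Φ ρ).trace).re = P →
        ∀ m n : ℕ, 2 ≤ m → 2 ≤ n → ∀ hmn : m * n = d ^ N,
          ¬ IsAbsSep (Matrix.reindex (biEquiv d N m n hmn) (biEquiv d N m n hmn)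
            (kronPow (fun _ : Fin N => Φ ρ)))) ∧
    ((h < Real.log d ∧ (N : ℝ) > 8 * ((Real.log d + 1) / (Real.log d - h)) ^ 2 + 1) →
      ∀ ρ, ∀ hρ : IsDM ρ,
        (-∑ i, ((hpos ρ hρ.1).isHermitian.eigenvalues i *
          Real.log ((hpos ρ hρ.1).isHermitian.eigenvalues i))) = h →
        ∀ m n : ℕ, 2 ≤ m → 2 ≤ n → ∀ hmn : m * n = d ^ N,
          ¬ IsAbsSep (Matrix.reindex (biEquiv d N m n hmn) (biEquiv d N m n hmn)
            (kronPow (fun _ : Fin N => Φ ρ)))) := by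
  have htrΦ : ∀ ρ, IsDM ρ → (Φ ρ).trace = 1 := fun ρ hρ => (htr ρ).trans hρ.2
  have purity := fun ρ (hρ : IsDM ρ) {m n} (hm : 2 ≤ m) (hn : 2 ≤ n) (hmn : m * n = d ^ N) =>
    not_isAbsSep_reindex_kronPow_of_purity hm hn hmn (hpos ρ hρ.1) (htrΦ ρ hρ)
  have entropy := fun ρ (hρ : IsDM ρ) {m n} (hm : 2 ≤ m) (hn : 2 ≤ n) (hmn : m * n = d ^ N) =>
    not_isAbsSep_reindex_kronPow_of_entropy hm hn hmn (hpos ρ hρ.1) (htrΦ ρ hρ)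
  have hn : 2 ≤ d ^ (N - 1) := hd.trans (Nat.le_self_pow (by omega) d)
  have hmn : d * d ^ (N - 1) = d ^ N := by rw [← pow_succ']; congr 1; omega
  refine ⟨⟨d, d ^ (N - 1), hd, hn, hmn, fun hall => ?_⟩,
    fun ⟨hdP, hNP⟩ ρ hρ hρP m n hm hn hmn => purity ρ hρ hm hn hmn (hρP ▸ hdP) (hρP ▸ hNP),
    fun ⟨hhd, hNh⟩ ρ hρ hρh m n hm hn hmn => entropy ρ hρ hm hn hmn (hρh ▸ hhd) (hρh ▸ hNh)⟩
  have hkron : ∀ ρ, IsDM ρ → IsAbsSep (reindex (biEquiv d N d (d ^ (N - 1)) hmn)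
      (biEquiv d N d (d ^ (N - 1)) hmn) (kronPow fun _ : Fin N => Φ ρ)) := fun ρ hρ =>
    kronPowMap_kronPow Φ (fun _ => ρ) ▸ hall _ (IsDM.kronPow fun _ => hρ)
  rcases hcond with ⟨hdP, hNP⟩ | ⟨hhd, hNh⟩
  · obtain ⟨ρ, hρ, rfl⟩ := hP.1
    exact purity ρ hρ hd hn hmn hdP hNP (hkron ρ hρ)
  · obtain ⟨ρ, hρ, rfl⟩ := hh.1
    exact entropy ρ hρ hd hn hmn hhd hNh (hkron ρ hρ)
end
end

section
/- Let m, n ≥ 2 and let α, β be real numbers with 1+α ≥ 0, 1+β ≥ 0, 1+α+β ≥ 0, and define the trace-preserving map Φ_{αβ} on mn×mn complex matrices by Φ_{αβ}[X] = (tr(X)·I_{mn} + αX + βX^⊤)/(mn + α + β). If Φ_{αβ} is absolutely separating with respect to the bipartition m|n, then max(|α+β|, |α−β|) ≤ 2. -/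
/-! Separable states have positive partial transpose, so every 2×2 principal minor of `ρ^Γ` is
nonnegative; at the indices `(a,d), (b,c)` this reads `|ρ_{ac,bd}|² ≤ ρ_{ad,ad} ρ_{bc,bc}`.
For the pure state of `(|ac⟩ + z|bd⟩)/√2` with `|z| = 1`, the two diagonal entries of
`Φ_{αβ}[ρ]` on the right are `1/D` (with `D = mn + α + β`), while the entry on the left is
`(α z̄ + β z)/(2D)`, whence `|α z̄ + β z| ≤ 2`. Taking `z = 1` and `z = i` gives the two bounds. -/

open Matrix Kronecker BigOperators
open scoped ComplexOrder

noncomputable section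


/-- Transposition as a `ℂ`-linear map. -/
def transposeLM (ι : Type*) [Fintype ι] :
    Matrix ι ι ℂ →ₗ[ℂ] Matrix ι ι ℂ where
  toFun X := Xᵀ
  map_add' := by intro X Y; ext i j; simp
  map_smul' := by intro c X; ext i j; simp

/-- The map `Φ_{αβ}[X] = (tr X · I + α X + β Xᵀ)/(d + α + β)`. -/
def ctitMap {ι : Type*} [Fintype ι] [DecidableEq ι] (α β : ℝ) :
    Matrix ι ι ℂ →ₗ[ℂ] Matrix ι ι ℂ :=
  ((((Fintype.card ι : ℝ) + α + β : ℝ) : ℂ))⁻¹ •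
    ((Matrix.traceLinearMap ι ℂ ℂ).smulRight (1 : Matrix ι ι ℂ) +
      (α : ℂ) • LinearMap.id + (β : ℂ) • transposeLM ι)

namespace Matrix

lemma PosSemidef.norm_sq_apply_le {ι : Type*} [Fintype ι] {A : Matrix ι ι ℂ}
    (hA : A.PosSemidef) (i j : ι) : (‖A i j‖ ^ 2 : ℂ) ≤ A i i * A j j := by
  have hdet := (hA.submatrix ![i, j]).det_nonneg
  rw [det_fin_two] at hdet
  simp only [submatrix_apply, cons_val_zero, cons_val_one, ← hA.1.apply j i, Complex.star_def,
    sub_nonneg] at hdet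
  rwa [Complex.mul_conj'] at hdet

def partialTranspose {ι κ : Type*} (ρ : Matrix (ι × κ) (ι × κ) ℂ) :
    Matrix (ι × κ) (ι × κ) ℂ :=
  of fun P Q => ρ (P.1, Q.2) (Q.1, P.2)

end Matrix

lemma IsSep.posSemidef_partialTranspose {ι κ : Type*} [Fintype ι] [Fintype κ]
    {ρ : Matrix (ι × κ) (ι × κ) ℂ} (h : IsSep ρ) : ρ.partialTranspose.PosSemidef := by
  obtain ⟨k, p, A, B, hp, -, hA, hB, rfl⟩ := h
  have : (∑ i, (p i : ℂ) • (A i ⊗ₖ B i)).partialTranspose = ∑ i, (p i : ℂ) • (A i ⊗ₖ (B i)ᵀ) := by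
    ext P Q
    simp [partialTranspose, Matrix.sum_apply, kroneckerMap_apply]
  rw [this]
  exact posSemidef_sum _ fun i _ =>
    ((hA i).1.kronecker (hB i).1.transpose).smul (by exact_mod_cast hp i)

lemma IsSep.norm_sq_apply_le {ι κ : Type*} [Fintype ι] [Fintype κ]
    {ρ : Matrix (ι × κ) (ι × κ) ℂ} (h : IsSep ρ) (a b : ι) (c d : κ) :
    (‖ρ (a, c) (b, d)‖ ^ 2 : ℂ) ≤ ρ (a, d) (a, d) * ρ (b, c) (b, c) :=
  h.posSemidef_partialTranspose.norm_sq_apply_le (a, d) (b, c)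

lemma ctitMap_apply {ι : Type*} [Fintype ι] [DecidableEq ι] (α β : ℝ)
    (ρ : Matrix ι ι ℂ) (P Q : ι) :
    ctitMap α β ρ P Q = (((Fintype.card ι : ℝ) + α + β : ℝ) : ℂ)⁻¹ *
      (ρ.trace * (1 : Matrix ι ι ℂ) P Q + α * ρ P Q + β * ρ Q P) := by
  simp [ctitMap, transposeLM, mul_add]

lemma norm_le_one_of_isSep_ctitMap {ι κ : Type*} [Fintype ι] [Fintype κ] [DecidableEq ι]
    [DecidableEq κ] {α β : ℝ} (hD : (Fintype.card (ι × κ) : ℝ) + α + β ≠ 0)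
    {ρ : Matrix (ι × κ) (ι × κ) ℂ} (hρ : ρ.trace = 1) {a b : ι} {c d : κ} (hab : a ≠ b)
    (had : ρ (a, d) (a, d) = 0) (hbc : ρ (b, c) (b, c) = 0)
    (hsep : IsSep (ctitMap α β ρ)) :
    ‖(α : ℂ) * ρ (a, c) (b, d) + β * ρ (b, d) (a, c)‖ ≤ 1 := by
  set D : ℝ := (Fintype.card (ι × κ) : ℝ) + α + β
  set x := (α : ℂ) * ρ (a, c) (b, d) + β * ρ (b, d) (a, c)
  have hoff : ctitMap α β ρ (a, c) (b, d) = (D : ℂ)⁻¹ * x := by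
    rw [ctitMap_apply, one_apply_ne (by simp [hab]), mul_zero, zero_add]
  have hdiag : ∀ P, ρ P P = 0 → ctitMap α β ρ P P = (D : ℂ)⁻¹ := fun P hP => by
    simp [ctitMap_apply, hP, hρ, D]
  have h : ‖(D : ℂ)⁻¹ * x‖ ^ 2 ≤ D⁻¹ * D⁻¹ := by
    have := hsep.norm_sq_apply_le a b c d
    rw [hoff, hdiag _ had, hdiag _ hbc] at this
    exact_mod_cast this
  rw [norm_mul, norm_inv, Complex.norm_real, Real.norm_eq_abs, mul_pow, inv_pow, sq_abs,
    ← mul_inv, ← sq, mul_le_iff_le_one_right (by positivity)] at h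
  nlinarith [norm_nonneg x]

section BellState

variable {ι κ : Type*} [DecidableEq ι] [DecidableEq κ]

def bellVector (a b : ι) (c d : κ) (z : ℂ) : ι × κ → ℂ :=
  Pi.single (a, c) 1 + Pi.single (b, d) z

/-- The pure state of `(|a c⟩ + z |b d⟩) / √2`. -/
def bellState (a b : ι) (c d : κ) (z : ℂ) : Matrix (ι × κ) (ι × κ) ℂ :=
  (2 : ℂ)⁻¹ • vecMulVec (bellVector a b c d z) (star (bellVector a b c d z))

lemma bellState_apply (a b : ι) (c d : κ) (z : ℂ) (P Q : ι × κ) :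
    bellState a b c d z P Q =
      2⁻¹ * (bellVector a b c d z P * starRingEnd ℂ (bellVector a b c d z Q)) := by
  simp [bellState, vecMulVec_apply]

lemma isDM_bellState [Fintype ι] [Fintype κ] {a b : ι} (hab : a ≠ b) (c d : κ) {z : ℂ}
    (hz : ‖z‖ = 1) : IsDM (bellState a b c d z) := by
  refine ⟨(posSemidef_vecMulVec_self_star _).smul (inv_nonneg.mpr zero_le_two), ?_⟩
  have hne : (b, d) ≠ (a, c) := by simp [hab.symm]
  rw [bellState, trace_smul, trace_vecMulVec]
  simp [bellVector, dotProduct_add, dotProduct_single, hne, hne.symm, Complex.mul_conj', hz]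
  norm_num

lemma norm_conj_add_le_two_of_isSep_ctitMap_bellState [Fintype ι] [Fintype κ] {α β : ℝ}
    (hD : (Fintype.card (ι × κ) : ℝ) + α + β ≠ 0) {a b : ι} (hab : a ≠ b) {c d : κ}
    (hcd : c ≠ d) {z : ℂ} (hz : ‖z‖ = 1)
    (hsep : IsSep (ctitMap α β (bellState a b c d z))) :
    ‖(α : ℂ) * starRingEnd ℂ z + β * z‖ ≤ 2 := by
  have h := norm_le_one_of_isSep_ctitMap hD (isDM_bellState hab c d hz).2 (c := c) (d := d) hab
    (by simp [bellState_apply, bellVector, hab, hcd.symm])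
    (by simp [bellState_apply, bellVector, hab.symm, hcd]) hsep
  have hdiv : (α : ℂ) * bellState a b c d z (a, c) (b, d) + β * bellState a b c d z (b, d) (a, c)
      = ((α : ℂ) * starRingEnd ℂ z + β * z) / 2 := by
    simp [bellState_apply, bellVector, hab, hab.symm]
    ring
  rwa [hdiv, norm_div, Complex.norm_two, div_le_one two_pos] at h

end BellState

theorem stmt18_general (m n : ℕ) (hm : 2 ≤ m) (hn : 2 ≤ n) (α β : ℝ)
    (hαβ : 0 ≤ 1 + α + β)
    (hAS : ∀ ρ : Matrix (Fin m × Fin n) (Fin m × Fin n) ℂ, IsDM ρ →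
      IsAbsSep (ctitMap α β ρ)) :
    max |α + β| |α - β| ≤ 2 := by
  have : Nontrivial (Fin m) := Fin.nontrivial_iff_two_le.mpr hm
  have : Nontrivial (Fin n) := Fin.nontrivial_iff_two_le.mpr hn
  obtain ⟨a, b, hab⟩ := exists_pair_ne (Fin m)
  obtain ⟨c, d, hcd⟩ := exists_pair_ne (Fin n)
  have hD : (Fintype.card (Fin m × Fin n) : ℝ) + α + β ≠ 0 := by
    have : (4 : ℝ) ≤ m * n := by exact_mod_cast Nat.mul_le_mul hm hn
    simp only [Fintype.card_prod, Fintype.card_fin, Nat.cast_mul]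
    linarith
  have key (z : ℂ) (hz : ‖z‖ = 1) : ‖(α : ℂ) * starRingEnd ℂ z + β * z‖ ≤ 2 :=
    norm_conj_add_le_two_of_isSep_ctitMap_bellState hD hab hcd hz <| by
      simpa using hAS _ (isDM_bellState hab c d hz) 1 (by simp)
  refine max_le ?_ ?_
  · simpa [← Complex.ofReal_add] using key 1 (by simp)
  · have h := key Complex.I (by simp)
    have hI : (α : ℂ) * -Complex.I + β * Complex.I = ((β - α : ℝ) : ℂ) * Complex.I := by
      push_cast; ring
    rwa [Complex.conj_I, hI, norm_mul, Complex.norm_I, mul_one, Complex.norm_real,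
      Real.norm_eq_abs, abs_sub_comm] at h

theorem stmt18 (m n : ℕ) (hm : 2 ≤ m) (hn : 2 ≤ n) (α β : ℝ)
    (hα : 0 ≤ 1 + α) (hβ : 0 ≤ 1 + β) (hαβ : 0 ≤ 1 + α + β)
    (hAS : ∀ ρ : Matrix (Fin m × Fin n) (Fin m × Fin n) ℂ, IsDM ρ →
      IsAbsSep (ctitMap α β ρ)) :
    max |α + β| |α - β| ≤ 2 :=
  stmt18_general m n hm hn α β hαβ hAS

end
end
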